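/- arXiv:1612.08611 — 3 statements merged into one kernel-verified Lean document; each statement's English description precedes it below -/
import Mathlib

section
/- Let H be a real inner product space and let p ≥ 2 be a real number. Then for all x, y ∈ H, ‖x+y‖^p − ‖x‖^p − p‖x‖^{p−2}⟨x,y⟩ ≤ (1/2)·p·(p−1)·(‖x‖^{p−2} + ‖x+y‖^{p−2})·‖y‖². -/
/-!
With `a = ‖x‖`, `b = ‖x + y‖`, `c = ‖y‖` one has `⟪x, y⟫ = (b² - a² - c²) / 2` and `|b - a| ≤ c`,
so the left-hand side equals the second-order Taylor remainder of `t ↦ t ^ p` between `a` and `b`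
plus `p a^(p-2) (c² - (b - a)²) / 2`. The remainder is at most `p (p - 1) / 2 · max(a, b)^(p-2) (b - a)²`,
because `t ↦ K t² / 2 - t ^ p` is convex on `[0, max a b]` for `K = p (p - 1) max(a, b)^(p-2)`
and so lies above its tangent at `a`.
-/

open scoped RealInnerProductSpace
open Set

theorem ConvexOn.add_mul_sub_le_of_hasDerivAt {S : Set ℝ} {f : ℝ → ℝ} {f' x y : ℝ}
    (hfc : ConvexOn ℝ S f) (hx : x ∈ S) (hy : y ∈ S) (hf : HasDerivAt f f' x) :
    f x + f' * (y - x) ≤ f y := by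
  rcases lt_trichotomy x y with hxy | rfl | hxy
  · have := hfc.le_slope_of_hasDerivAt hx hy hxy hf
    rw [slope_def_field, le_div_iff₀ (sub_pos.2 hxy)] at this
    linarith
  · simp
  · have := hfc.slope_le_of_hasDerivAt hy hx hxy hf
    rw [slope_def_field, div_le_iff₀ (sub_pos.2 hxy)] at this
    linarith

theorem Convex.taylor_remainder_le_of_hasDerivAt2_le {D : Set ℝ} (hD : Convex ℝ D)
    {f f' f'' : ℝ → ℝ} {K x y : ℝ} (hf : ∀ t ∈ D, HasDerivAt f (f' t) t)
    (hf' : ∀ t ∈ interior D, HasDerivAt f' (f'' t) t) (hK : ∀ t ∈ interior D, f'' t ≤ K)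
    (hx : x ∈ D) (hy : y ∈ D) :
    f y - f x - f' x * (y - x) ≤ K / 2 * (y - x) ^ 2 := by
  have hquad (t : ℝ) : HasDerivAt (fun s => K / 2 * s ^ 2) (K * t) t :=
    ((hasDerivAt_pow 2 t).const_mul (K / 2)).congr_deriv (by norm_num; ring)
  have hconv : ConvexOn ℝ D (fun s => K / 2 * s ^ 2 - f s) := by
    refine convexOn_of_hasDerivWithinAt2_nonneg hD (f' := fun t => K * t - f' t)
      (f'' := fun t => K - f'' t) ?_ ?_ ?_ ?_
    · exact fun t ht => ((hquad t).sub (hf t ht)).continuousAt.continuousWithinAt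
    · exact fun t ht => ((hquad t).sub (hf t (interior_subset ht))).hasDerivWithinAt
    · exact fun t ht =>
        (((hasDerivAt_id t).const_mul K).sub (hf' t ht)).hasDerivWithinAt.congr_deriv (by simp)
    · exact fun t ht => sub_nonneg.2 (hK t ht)
  have := hconv.add_mul_sub_le_of_hasDerivAt hx hy ((hquad x).sub (hf x hx))
  linear_combination this

theorem Real.rpow_taylor_remainder_le {p a b : ℝ} (hp : 2 ≤ p) (ha : 0 ≤ a) (hb : 0 ≤ b) :
    b ^ p - a ^ p - p * a ^ (p - 1) * (b - a) ≤
      p * (p - 1) / 2 * max a b ^ (p - 2) * (b - a) ^ 2 := by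
  have hderiv (t : ℝ) : HasDerivAt (fun s : ℝ => s ^ p) (p * t ^ (p - 1)) t :=
    Real.hasDerivAt_rpow_const (Or.inr (by linarith))
  have hderiv2 (t : ℝ) (ht : t ∈ interior (Icc 0 (max a b))) :
      HasDerivAt (fun s : ℝ => p * s ^ (p - 1)) (p * ((p - 1) * t ^ (p - 1 - 1))) t := by
    rw [interior_Icc] at ht
    exact (Real.hasDerivAt_rpow_const (Or.inl ht.1.ne')).const_mul p
  have hbound (t : ℝ) (ht : t ∈ interior (Icc 0 (max a b))) :
      p * ((p - 1) * t ^ (p - 1 - 1)) ≤ p * (p - 1) * max a b ^ (p - 2) := by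
    rw [interior_Icc] at ht
    rw [← mul_assoc, show p - 1 - 1 = p - 2 by ring]
    exact mul_le_mul_of_nonneg_left (Real.rpow_le_rpow ht.1.le ht.2.le (by linarith))
      (by nlinarith)
  have := (convex_Icc 0 (max a b)).taylor_remainder_le_of_hasDerivAt2_le
    (fun t _ => hderiv t) hderiv2 hbound ⟨ha, le_max_left a b⟩ ⟨hb, le_max_right a b⟩
  linear_combination this

/-- Key pointwise inequality (Lemma 3.6): for a real inner product space `H` and `p ≥ 2`,
`‖x+y‖^p − ‖x‖^p − p‖x‖^{p−2}⟨x,y⟩ ≤ (1/2)p(p−1)(‖x‖^{p−2} + ‖x+y‖^{p−2})‖y‖²`. -/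
theorem pointwise_pth_power_inequality
    {H : Type*} [NormedAddCommGroup H] [InnerProductSpace ℝ H]
    (p : ℝ) (hp : 2 ≤ p) (x y : H) :
    ‖x + y‖ ^ p - ‖x‖ ^ p - p * ‖x‖ ^ (p - 2) * ⟪x, y⟫ ≤
      (1 / 2) * p * (p - 1) * (‖x‖ ^ (p - 2) + ‖x + y‖ ^ (p - 2)) * ‖y‖ ^ (2 : ℕ) := by
  have ha := norm_nonneg x
  have hb := norm_nonneg (x + y)
  set a := ‖x‖
  set b := ‖x + y‖
  set c := ‖y‖
  have hinner : ⟪x, y⟫ = (b ^ 2 - a ^ 2 - c ^ 2) / 2 := by linarith [norm_add_sq_real x y]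
  have hdist : (b - a) ^ 2 ≤ c ^ 2 := by
    simpa using pow_le_pow_left₀ (abs_nonneg _) (abs_norm_sub_norm_le (x + y) x) 2
  have hsplit : a ^ (p - 1) = a ^ (p - 2) * a := by
    rw [show p - 1 = p - 2 + 1 by ring, Real.rpow_add_one' ha (by linarith)]
  have hA : 0 ≤ a ^ (p - 2) := Real.rpow_nonneg ha _
  have hB : 0 ≤ b ^ (p - 2) := Real.rpow_nonneg hb _
  have hmax : max a b ^ (p - 2) ≤ a ^ (p - 2) + b ^ (p - 2) := by
    rw [Real.rpow_max ha hb (by linarith)]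
    exact max_le_add_of_nonneg hA hB
  have hcoef : 0 ≤ p * (p - 1) / 2 := by nlinarith
  calc b ^ p - a ^ p - p * a ^ (p - 2) * ⟪x, y⟫
      = (b ^ p - a ^ p - p * a ^ (p - 1) * (b - a))
          + p / 2 * a ^ (p - 2) * (c ^ 2 - (b - a) ^ 2) := by
        rw [hinner, hsplit]; ring
    _ ≤ p * (p - 1) / 2 * max a b ^ (p - 2) * (b - a) ^ 2
          + p * (p - 1) / 2 * (a ^ (p - 2) + b ^ (p - 2)) * (c ^ 2 - (b - a) ^ 2) := by
        refine add_le_add (Real.rpow_taylor_remainder_le hp ha hb)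
          (mul_le_mul_of_nonneg_right ?_ (sub_nonneg.2 hdist))
        nlinarith [mul_nonneg (mul_nonneg (by linarith : 0 ≤ p) (sub_nonneg.2 hp)) hA,
          mul_nonneg hcoef hB]
    _ ≤ p * (p - 1) / 2 * (a ^ (p - 2) + b ^ (p - 2)) * (b - a) ^ 2
          + p * (p - 1) / 2 * (a ^ (p - 2) + b ^ (p - 2)) * (c ^ 2 - (b - a) ^ 2) := by
        gcongr
    _ = (1 / 2) * p * (p - 1) * (a ^ (p - 2) + b ^ (p - 2)) * c ^ (2 : ℕ) := by ring
end

section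
/- Let H be a real inner product space and let p ≥ 2 be a real number. For all x, y ∈ H there exists τ ∈ [0,1] such that ‖x+y‖^p − ‖x‖^p − p·‖x‖^{p−2}·⟨x,y⟩ ≤ (1/2)·p·(p−1)·‖x + τ·y‖^{p−2}·‖y‖². -/
/-!
Write `z = x + s • y` and `f s = ‖z‖ ^ p`. Then `f' s = p ‖z‖ ^ (p - 2) ⟪z, y⟫`, and wherever
`z ≠ 0` (for `y ≠ 0` this excludes at most one `s`),
`f'' s = p (p - 2) ‖z‖ ^ (p - 4) ⟪z, y⟫ ^ 2 + p ‖z‖ ^ (p - 2) ‖y‖ ^ 2 ≤ p (p - 1) ‖z‖ ^ (p - 2) ‖y‖ ^ 2`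
by Cauchy–Schwarz. Choosing `τ` to maximise `‖x + s • y‖` on `[0, 1]` bounds `f''` by
`M = p (p - 1) ‖x + τ • y‖ ^ (p - 2) ‖y‖ ^ 2`, and since `f'` is continuous a single point where
`f''` does not exist does not spoil the Taylor estimate `f 1 - f 0 - f' 0 ≤ M / 2`.
-/

open scoped RealInnerProductSpace
open Set

theorem monotoneOn_Icc_of_hasDerivAt_nonneg_of_ne {f f' : ℝ → ℝ} {a b c : ℝ}
    (hf : ContinuousOn f (Icc a b)) (hf' : ∀ s ∈ Ioo a b, s ≠ c → HasDerivAt f (f' s) s)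
    (hf'₀ : ∀ s ∈ Ioo a b, s ≠ c → 0 ≤ f' s) : MonotoneOn f (Icc a b) := by
  have avoiding : ∀ a' b', a ≤ a' → b' ≤ b → c ∉ Ioo a' b' → MonotoneOn f (Icc a' b') := by
    intro a' b' ha hb hc
    have hsub : Ioo a' b' ⊆ Ioo a b := Ioo_subset_Ioo ha hb
    refine monotoneOn_of_hasDerivWithinAt_nonneg (f' := f') (convex_Icc a' b')
      (hf.mono (Icc_subset_Icc ha hb)) (fun s hs => ?_) (fun s hs => ?_) <;>
    simp only [interior_Icc] at hs ⊢
    · exact (hf' s (hsub hs) (ne_of_mem_of_not_mem hs hc)).hasDerivWithinAt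
    · exact hf'₀ s (hsub hs) (ne_of_mem_of_not_mem hs hc)
  by_cases hc : c ∈ Ioo a b
  · rw [← Icc_union_Icc_eq_Icc hc.1.le hc.2.le]
    exact (avoiding a c le_rfl hc.2.le (fun h => h.2.false)).union_right
      (avoiding c b hc.1.le le_rfl (fun h => h.1.false))
      (isGreatest_Icc hc.1.le) (isLeast_Icc hc.2.le)
  · exact avoiding a b le_rfl le_rfl hc

theorem sub_sub_deriv_mul_le_of_hasDerivAt_le {g g' g'' : ℝ → ℝ} {a b c M : ℝ} (hab : a ≤ b)
    (hg : ∀ s ∈ Icc a b, HasDerivAt g (g' s) s) (hg'_cont : ContinuousOn g' (Icc a b))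
    (hg' : ∀ s ∈ Ioo a b, s ≠ c → HasDerivAt g' (g'' s) s)
    (hg'' : ∀ s ∈ Ioo a b, s ≠ c → g'' s ≤ M) :
    g b - g a - g' a * (b - a) ≤ M / 2 * (b - a) ^ 2 := by
  have slope_gap : MonotoneOn (fun s => M * (s - a) - (g' s - g' a)) (Icc a b) := by
    refine monotoneOn_Icc_of_hasDerivAt_nonneg_of_ne (by fun_prop) (fun s hs hsc => ?_)
      (fun s hs hsc => sub_nonneg.2 (hg'' s hs hsc))
    exact ((((hasDerivAt_id' s).sub_const a).const_mul M).sub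
      ((hg' s hs hsc).sub_const (g' a))).congr_deriv (by ring)
  have remainder_gap : MonotoneOn
      (fun s => M / 2 * (s - a) ^ 2 - (g s - g a - g' a * (s - a))) (Icc a b) := by
    refine monotoneOn_Icc_of_hasDerivAt_nonneg_of_ne (c := c)
      (f' := fun s => M * (s - a) - (g' s - g' a)) ?_ (fun s hs _ => ?_) (fun s hs _ => ?_)
    · have hg_cont : ContinuousOn g (Icc a b) := fun s hs =>
        (hg s hs).continuousAt.continuousWithinAt
      fun_prop
    · exact (((((hasDerivAt_id' s).sub_const a).pow 2).const_mul (M / 2)).sub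
        (((hg s (Ioo_subset_Icc_self hs)).sub_const (g a)).sub
          (((hasDerivAt_id' s).sub_const a).const_mul (g' a)))).congr_deriv (by ring)
    · have := slope_gap (left_mem_Icc.2 hab) (Ioo_subset_Icc_self hs) hs.1.le
      simp only [sub_self, mul_zero] at this
      linarith
  simpa using remainder_gap (left_mem_Icc.2 hab) (right_mem_Icc.2 hab) hab

section InnerProductSpace

variable {E : Type*} [NormedAddCommGroup E] [InnerProductSpace ℝ E]

theorem HasDerivAt.norm_rpow {f : ℝ → E} {f' : E} {s q : ℝ} (hf : HasDerivAt f f' s)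
    (h : f s ≠ 0 ∨ 1 < q) :
    HasDerivAt (fun t => ‖f t‖ ^ q) (q * ‖f s‖ ^ (q - 2) * ⟪f s, f'⟫) s := by
  rcases h with h | hq
  · have sq_rpow (z : E) (r : ℝ) : (‖z‖ ^ 2) ^ r = ‖z‖ ^ (2 * r) := by
      rw [← Real.rpow_natCast_mul (norm_nonneg z)]; norm_num
    have := hf.norm_sq.rpow_const (p := q / 2) (Or.inl (by positivity))
    simp only [sq_rpow, mul_div_cancel₀ q two_ne_zero] at this
    exact this.congr_deriv (by ring_nf)
  · exact ((hasFDerivAt_norm_rpow (f s) hq).comp_hasDerivAt s hf).congr_deriv (by simp)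

theorem hasDerivAt_add_smul (x y : E) (s : ℝ) : HasDerivAt (fun t : ℝ => x + t • y) y s := by
  simpa using ((hasDerivAt_id' s).smul_const y).const_add x

theorem hasDerivAt_norm_rpow_mul_inner_add_smul {x y : E} {q s : ℝ} (h : x + s • y ≠ 0) :
    HasDerivAt (fun t : ℝ => ‖x + t • y‖ ^ q * ⟪x + t • y, y⟫)
      (q * ‖x + s • y‖ ^ (q - 2) * ⟪x + s • y, y⟫ ^ 2 + ‖x + s • y‖ ^ q * ‖y‖ ^ 2) s := by
  have hline := hasDerivAt_add_smul x y s
  refine ((hline.norm_rpow (Or.inl h)).mul (hline.inner ℝ (hasDerivAt_const s y))).congr_deriv ?_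
  rw [inner_zero_right, real_inner_self_eq_norm_sq]
  ring

theorem mul_rpow_sub_two_mul_inner_sq_add_le {z : E} (y : E) {q : ℝ} (hq : 0 ≤ q)
    (hz : z ≠ 0) :
    q * ‖z‖ ^ (q - 2) * ⟪z, y⟫ ^ 2 + ‖z‖ ^ q * ‖y‖ ^ 2 ≤ (q + 1) * ‖z‖ ^ q * ‖y‖ ^ 2 := by
  have cauchy_schwarz : ⟪z, y⟫ ^ 2 ≤ ‖z‖ ^ 2 * ‖y‖ ^ 2 := by
    rw [← mul_pow, ← sq_abs]
    exact pow_le_pow_left₀ (abs_nonneg _) (abs_real_inner_le_norm z y) 2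
  have hpow : ‖z‖ ^ (q - 2) * ‖z‖ ^ 2 = ‖z‖ ^ q := by
    rw [Real.rpow_sub (norm_pos_iff.2 hz), Real.rpow_two, div_mul_cancel₀ _ (by positivity)]
  calc q * ‖z‖ ^ (q - 2) * ⟪z, y⟫ ^ 2 + ‖z‖ ^ q * ‖y‖ ^ 2
      ≤ q * ‖z‖ ^ (q - 2) * (‖z‖ ^ 2 * ‖y‖ ^ 2) + ‖z‖ ^ q * ‖y‖ ^ 2 := by gcongr
    _ = (q + 1) * ‖z‖ ^ q * ‖y‖ ^ 2 := by rw [← hpow]; ring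

theorem eq_of_add_smul_eq_zero {x y : E} {s : ℝ} (hy : y ≠ 0) (h : x + s • y = 0) :
    s = -⟪x, y⟫ / ‖y‖ ^ 2 := by
  have := congrArg (⟪·, y⟫) h
  simp only [inner_add_left, real_inner_smul_left, real_inner_self_eq_norm_sq,
    inner_zero_left] at this
  field_simp
  linarith

theorem norm_add_rpow_sub_sub_le {x y : E} {p K : ℝ} (hp : 2 ≤ p)
    (hK : ∀ s ∈ Icc (0 : ℝ) 1, ‖x + s • y‖ ≤ K) :
    ‖x + y‖ ^ p - ‖x‖ ^ p - p * ‖x‖ ^ (p - 2) * ⟪x, y⟫ ≤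
      1 / 2 * p * (p - 1) * K ^ (p - 2) * ‖y‖ ^ 2 := by
  rcases eq_or_ne y 0 with rfl | hy
  · simp
  have second_deriv_le : ∀ s ∈ Ioo (0 : ℝ) 1, s ≠ -⟪x, y⟫ / ‖y‖ ^ 2 →
      p * ((p - 2) * ‖x + s • y‖ ^ (p - 2 - 2) * ⟪x + s • y, y⟫ ^ 2
        + ‖x + s • y‖ ^ (p - 2) * ‖y‖ ^ 2) ≤ p * (p - 1) * K ^ (p - 2) * ‖y‖ ^ 2 := by
    intro s hs hsc
    have hz : x + s • y ≠ 0 := fun h => hsc (eq_of_add_smul_eq_zero hy h)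
    have hK' : ‖x + s • y‖ ^ (p - 2) ≤ K ^ (p - 2) :=
      Real.rpow_le_rpow (norm_nonneg _) (hK s (Ioo_subset_Icc_self hs)) (by linarith)
    have hp1 : 0 ≤ p - 1 := by linarith
    calc _ ≤ p * ((p - 2 + 1) * ‖x + s • y‖ ^ (p - 2) * ‖y‖ ^ 2) := by
          gcongr
          exact mul_rpow_sub_two_mul_inner_sq_add_le y (by linarith) hz
      _ = p * (p - 1) * ‖x + s • y‖ ^ (p - 2) * ‖y‖ ^ 2 := by ring
      _ ≤ p * (p - 1) * K ^ (p - 2) * ‖y‖ ^ 2 := by gcongr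
  have taylor := sub_sub_deriv_mul_le_of_hasDerivAt_le zero_le_one
    (g := fun s => ‖x + s • y‖ ^ p)
    (g' := fun s => p * (‖x + s • y‖ ^ (p - 2) * ⟪x + s • y, y⟫))
    (fun s _ => ((hasDerivAt_add_smul x y s).norm_rpow (Or.inr (by linarith))).congr_deriv
      (mul_assoc ..))
    (Continuous.continuousOn (continuous_const.mul (((by fun_prop : Continuous fun s : ℝ =>
      ‖x + s • y‖).rpow_const fun _ => Or.inr (by linarith)).mul (by fun_prop))))
    (fun s _ hsc => (hasDerivAt_norm_rpow_mul_inner_add_smul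
      fun h => hsc (eq_of_add_smul_eq_zero hy h)).const_mul p)
    second_deriv_le
  simp only [zero_smul, one_smul, add_zero, sub_zero, one_pow, mul_one] at taylor
  linarith

end InnerProductSpace

/-- Taylor-remainder step in the proof of Lemma 3.6: there exists `τ ∈ [0,1]` with
`‖x+y‖^p − ‖x‖^p − p‖x‖^{p−2}⟨x,y⟩ ≤ (1/2)p(p−1)‖x + τ·y‖^{p−2}‖y‖²`. -/
theorem taylor_remainder_pth_power
    {H : Type*} [NormedAddCommGroup H] [InnerProductSpace ℝ H]
    (p : ℝ) (hp : 2 ≤ p) (x y : H) :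
    ∃ τ ∈ Set.Icc (0 : ℝ) 1,
      ‖x + y‖ ^ p - ‖x‖ ^ p - p * ‖x‖ ^ (p - 2) * ⟪x, y⟫ ≤
        (1 / 2) * p * (p - 1) * ‖x + τ • y‖ ^ (p - 2) * ‖y‖ ^ (2 : ℕ) := by
  obtain ⟨τ, hτ, hτ_max⟩ := isCompact_Icc.exists_isMaxOn (nonempty_Icc.2 zero_le_one)
    (by fun_prop : Continuous fun s : ℝ => ‖x + s • y‖).continuousOn
  exact ⟨τ, hτ, norm_add_rpow_sub_sub_le hp fun s hs => hτ_max hs⟩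
end

section
/- Let (Ω, μ) be a measure space, let p ≥ 2 be a real number, set θ = (p−2)/(2(p−1)), and let f : Ω → [0,∞] be a measurable function. Then (∫ f² dμ)^{p/2} ≤ θ·(∫ f dμ)^p + (1−θ)·(∫ f^p dμ), where the integrals are Lebesgue integrals with values in [0,∞]. -/
/-!
Hölder's inequality makes `r ↦ ∫ f ^ r` log-convex, and `2` is the convex combination
`(p - 2)/(p - 1) · 1 + 1/(p - 1) · p`, so `∫ f² ≤ (∫ f)^((p-2)/(p-1)) (∫ f^p)^(1/(p-1))`.
Raising this to the power `p/2` turns the exponents into `pθ` and `1 - θ`, and the weighted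
AM–GM inequality `x^θ y^(1-θ) ≤ θ x + (1 - θ) y` finishes the proof.
-/

open MeasureTheory

theorem ENNReal.geom_mean_le_arith_mean2_weighted {w₁ w₂ : ℝ} (hw₁ : 0 ≤ w₁) (hw₂ : 0 ≤ w₂)
    (hw : w₁ + w₂ = 1) (a b : ENNReal) :
    a ^ w₁ * b ^ w₂ ≤ ENNReal.ofReal w₁ * a + ENNReal.ofReal w₂ * b := by
  rcases hw₁.eq_or_lt with rfl | hw₁'
  · obtain rfl : w₂ = 1 := by linarith
    simp
  rcases hw₂.eq_or_lt with rfl | hw₂'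
  · obtain rfl : w₁ = 1 := by linarith
    simp
  by_cases hab : a = ⊤ ∨ b = ⊤
  · rcases hab with rfl | rfl <;> simp [hw₁', hw₂']
  push Not at hab
  lift a to NNReal using hab.1
  lift b to NNReal using hab.2
  have h := NNReal.geom_mean_le_arith_mean2_weighted w₁.toNNReal w₂.toNNReal a b
    (by rw [← Real.toNNReal_add hw₁ hw₂, hw, Real.toNNReal_one])
  rw [Real.coe_toNNReal _ hw₁, Real.coe_toNNReal _ hw₂] at h
  rw [← ENNReal.coe_rpow_of_nonneg _ hw₁, ← ENNReal.coe_rpow_of_nonneg _ hw₂, ENNReal.ofReal,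
    ENNReal.ofReal]
  exact_mod_cast h

theorem lintegral_rpow_interpolation_le {α : Type*} [MeasurableSpace α] {μ : Measure α}
    {f : α → ENNReal} (hf : AEMeasurable f μ) {a b s t : ℝ} (ha : 0 ≤ a) (hb : 0 ≤ b)
    (hs : 0 ≤ s) (ht : 0 ≤ t) (hst : s + t = 1) :
    ∫⁻ x, f x ^ (s * a + t * b) ∂μ ≤ (∫⁻ x, f x ^ a ∂μ) ^ s * (∫⁻ x, f x ^ b ∂μ) ^ t := by
  have hsplit : ∀ x, f x ^ (s * a + t * b) = (f x ^ a) ^ s * (f x ^ b) ^ t := fun x => by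
    rw [← ENNReal.rpow_mul, ← ENNReal.rpow_mul, mul_comm a, mul_comm b,
      ENNReal.rpow_add_of_nonneg _ _ (by positivity) (by positivity)]
  simp only [hsplit]
  exact ENNReal.lintegral_mul_norm_pow_le (hf.pow_const a) (hf.pow_const b) hs ht hst

/-- Interpolation plus weighted AM–GM (used in the proof of Theorem 2.3): with
`θ = (p−2)/(2(p−1))`, `(∫ f² dμ)^{p/2} ≤ θ·(∫ f dμ)^p + (1−θ)·∫ f^p dμ`. -/
theorem lintegral_sq_rpow_le_weighted_sum
    {Ω : Type*} [MeasurableSpace Ω] (μ : Measure Ω)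
    (p : ℝ) (hp : 2 ≤ p)
    (θ : ℝ) (hθ : θ = (p - 2) / (2 * (p - 1)))
    (f : Ω → ENNReal) (hf : Measurable f) :
    (∫⁻ ω, f ω ^ (2 : ℝ) ∂μ) ^ (p / 2) ≤
      ENNReal.ofReal θ * (∫⁻ ω, f ω ∂μ) ^ p
        + ENNReal.ofReal (1 - θ) * ∫⁻ ω, f ω ^ p ∂μ := by
  have hp1 : 0 < p - 1 := by linarith
  have hθ0 : 0 ≤ θ := hθ ▸ by positivity
  have hθ1 : 0 ≤ 1 - θ := by
    rw [hθ, sub_nonneg, div_le_one (by positivity)]; linarith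
  have hinterp : ∫⁻ ω, f ω ^ (2 : ℝ) ∂μ ≤
      (∫⁻ ω, f ω ∂μ) ^ ((p - 2) / (p - 1)) * (∫⁻ ω, f ω ^ p ∂μ) ^ (1 / (p - 1)) := by
    have h := lintegral_rpow_interpolation_le (hf.aemeasurable (μ := μ)) (b := p) zero_le_one
      (by linarith) (div_nonneg (by linarith) hp1.le) (by positivity)
      (show (p - 2) / (p - 1) + 1 / (p - 1) = 1 by field_simp; ring)
    rwa [show (p - 2) / (p - 1) * 1 + 1 / (p - 1) * p = 2 by field_simp; ring,
      funext fun ω => ENNReal.rpow_one (f ω)] at h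
  calc (∫⁻ ω, f ω ^ (2 : ℝ) ∂μ) ^ (p / 2)
      ≤ ((∫⁻ ω, f ω ∂μ) ^ ((p - 2) / (p - 1)) * (∫⁻ ω, f ω ^ p ∂μ) ^ (1 / (p - 1))) ^ (p / 2) :=
        ENNReal.rpow_le_rpow hinterp (by positivity)
    _ = ((∫⁻ ω, f ω ∂μ) ^ p) ^ θ * (∫⁻ ω, f ω ^ p ∂μ) ^ (1 - θ) := by
        rw [ENNReal.mul_rpow_of_nonneg _ _ (by positivity), ← ENNReal.rpow_mul,
          ← ENNReal.rpow_mul, ← ENNReal.rpow_mul, hθ]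
        congr 2
        · field_simp
        · field_simp; ring
    _ ≤ _ := ENNReal.geom_mean_le_arith_mean2_weighted hθ0 hθ1 (by ring) _ _
end
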